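/- Let L be a symmetric Leibniz algebra over a field F. Then L² = span{[x,y] : x, y ∈ L} with the restricted bracket is a Lie algebra; in particular [a,a] = 0 for every a ∈ L². -/

import Mathlib

/-- `L² = span {[x,y] : x, y ∈ L}`. -/
def algSquare {F L : Type*} [Field F] [AddCommGroup L] [Module F L]
    (br : L →ₗ[F] L →ₗ[F] L) : Submodule F L :=
  Submodule.span F {w : L | ∃ x y : L, w = br x y}

/-!
Comparing the right and the left Leibniz identities for `[x, [y, z]]` shows that every
bracket anticommutes with everything: `[b, [x, y]] = -[[x, y], b]`. By linearity this
anticommutativity extends to all of `L²`, and then `[a, a] = 0` on `L²` follows from the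
hypothesis `[[x, y], [x, y]] = 0` on generators, since the cross terms of `[u + v, u + v]`
cancel. The right Leibniz identity read with anticommutativity is the Jacobi identity.
-/

section Leibniz

variable {R L : Type*} [CommRing R] [AddCommGroup L] [Module R L] {br : L →ₗ[R] L →ₗ[R] L}

theorem br_br_eq_neg_of_leibniz
    (hright : ∀ x y z : L, br x (br y z) = br (br x y) z - br (br x z) y)
    (hleft : ∀ x y z : L, br x (br y z) = br (br x y) z + br y (br x z)) (b x y : L) :
    br b (br x y) = -br (br x y) b := by
  have h := (hright x b y).symm.trans (hleft x b y)
  rw [sub_eq_add_neg] at h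
  exact (add_left_cancel h).symm

end Leibniz

section AlgSquare

variable {F L : Type*} [Field F] [AddCommGroup L] [Module F L] {br : L →ₗ[F] L →ₗ[F] L}

theorem br_mem_algSquare (br : L →ₗ[F] L →ₗ[F] L) (x y : L) : br x y ∈ algSquare br :=
  Submodule.subset_span ⟨x, y, rfl⟩

theorem algSquare_le_ker_add_flip
    (hright : ∀ x y z : L, br x (br y z) = br (br x y) z - br (br x z) y)
    (hleft : ∀ x y z : L, br x (br y z) = br (br x y) z + br y (br x z)) :
    algSquare br ≤ LinearMap.ker (br + br.flip) := by
  refine Submodule.span_le.mpr ?_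
  rintro _ ⟨x, y, rfl⟩
  ext b
  simp [br_br_eq_neg_of_leibniz hright hleft b x y]

theorem br_eq_neg_of_mem_algSquare
    (hright : ∀ x y z : L, br x (br y z) = br (br x y) z - br (br x z) y)
    (hleft : ∀ x y z : L, br x (br y z) = br (br x y) z + br y (br x z))
    {a : L} (ha : a ∈ algSquare br) (b : L) : br a b = -br b a := by
  have h := LinearMap.congr_fun (algSquare_le_ker_add_flip hright hleft ha) b
  simpa [eq_neg_iff_add_eq_zero] using h

theorem br_self_eq_zero_of_mem_algSquare
    (hright : ∀ x y z : L, br x (br y z) = br (br x y) z - br (br x z) y)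
    (hleft : ∀ x y z : L, br x (br y z) = br (br x y) z + br y (br x z))
    (hsq : ∀ x y : L, br (br x y) (br x y) = 0) {a : L} (ha : a ∈ algSquare br) :
    br a a = 0 := by
  induction ha using Submodule.span_induction with
  | mem w hw =>
    obtain ⟨x, y, rfl⟩ := hw
    exact hsq x y
  | zero => simp
  | add u v hu _ ihu ihv =>
    simp only [map_add, LinearMap.add_apply, ihu, ihv,
      br_eq_neg_of_mem_algSquare hright hleft hu v]
    abel
  | smul c u _ ihu => simp [ihu]

theorem jacobi_of_mem_algSquare
    (hright : ∀ x y z : L, br x (br y z) = br (br x y) z - br (br x z) y)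
    (hleft : ∀ x y z : L, br x (br y z) = br (br x y) z + br y (br x z))
    {a : L} (ha : a ∈ algSquare br) (b c : L) :
    br (br a b) c + br (br b c) a + br (br c a) b = 0 := by
  have h := hright a b c
  rw [br_br_eq_neg_of_leibniz hright hleft, br_eq_neg_of_mem_algSquare hright hleft ha c,
    map_neg, LinearMap.neg_apply, sub_neg_eq_add, neg_eq_iff_eq_neg] at h
  rw [h]
  abel

end AlgSquare

theorem stmt_17 (F : Type*) [Field F]
    (L : Type*) [AddCommGroup L] [Module F L]
    (br : L →ₗ[F] L →ₗ[F] L)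
    (hright : ∀ x y z : L, br x (br y z) = br (br x y) z - br (br x z) y)
    (hleft : ∀ x y z : L, br x (br y z) = br (br x y) z + br y (br x z))
    (hsq : ∀ x y : L, br (br x y) (br x y) = 0) :
    (∀ a ∈ algSquare br, ∀ b ∈ algSquare br, br a b ∈ algSquare br) ∧
      (∀ a ∈ algSquare br, br a a = 0) ∧
      (∀ a ∈ algSquare br, ∀ b ∈ algSquare br, ∀ c ∈ algSquare br,
        br (br a b) c + br (br b c) a + br (br c a) b = 0) :=
  ⟨fun a _ b _ => br_mem_algSquare br a b,
    fun _ ha => br_self_eq_zero_of_mem_algSquare hright hleft hsq ha,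
    fun _ ha b _ c _ => jacobi_of_mem_algSquare hright hleft ha b c⟩
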